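/- Let F be a finite field of odd characteristic p, let PSL₂(F) denote the quotient of SL₂(F) by its center, and let 𝒞 be a conjugacy class of elements of order p in PSL₂(F). Then the Killing graph 𝒢(PSL₂(F), 𝒞) is connected; equivalently, the Killing form K_𝒞 is irreducible. -/

import Mathlib

/-- The Killing graph of a conjugation-stable subset `C` of a group `G`:
vertices are the elements of `C`, and distinct `a b : C` are adjacent iff the
centraliser of `a * b` meets `C`, i.e. iff the Killing form `K_C(a,b)` is nonzero. -/
def killingGraph {G : Type*} [Group G] (C : Set G) : SimpleGraph C :=
  SimpleGraph.fromRel fun a b => ∃ c ∈ C, Commute c ((a : G) * (b : G))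

/-- The commuting graph on a subset `C` of a group: distinct elements are
adjacent iff they commute. -/
def commGraph {G : Type*} [Group G] (C : Set G) : SimpleGraph C :=
  SimpleGraph.fromRel fun a b => Commute (a : G) (b : G)

/-- The matrix of the Killing form on `C` over `ℚ`:
`K_C(a,b) = |C_G(ab) ∩ C|`. -/
noncomputable def killingMatrix {G : Type*} [Group G] (C : Set G) [Fintype C] :
    Matrix C C ℚ :=
  Matrix.of fun a b => (Set.ncard {c ∈ C | Commute c ((a : G) * (b : G))} : ℚ)

/-- The set of involutions of a group. -/
def involSet (G : Type*) [Monoid G] : Set G := {x | x ^ 2 = 1 ∧ x ≠ 1}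

/-!
Every element of order `p` of `PSL₂(F)` lifts to an element `B` of `SL₂(F)` with `B ^ p = 1`,
so `B - 1` is nilpotent and `B = 1 + s • v (Jv)ᵀ` is a unipotent `u(s, v)`. Conjugation
moves `v` freely and fixes `s`, so the class is `{u(s, v) | v ≠ 0}`. Unipotents with proportional vectors commute. For `ω = det (v, w) ≠ 0`, the
product `u(s, v) u(s, μw)` has trace `2 - s²μ²ω²`, which is `-2` when `sμω = 2`, solvable as
`2 ≠ 0`; an element of trace `-2` is minus a unipotent, so it commutes with some `u(s, v')` of the
class. Thus `u(s, v)` is adjacent to `u(s, μw)`, which commutes with `u(s, w)`.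
-/

open Matrix
open scoped MatrixGroups

local notation "PSL(2, " F ")" => SL(2, F) ⧸ Subgroup.center SL(2, F)

section KillingGraph

variable {G : Type*} [Group G] {C : Set G}

theorem killingGraph_reachable_of_exists_commute_mul (a b : C)
    (h : ∃ c ∈ C, Commute c ((a : G) * b)) : (killingGraph C).Reachable a b := by
  by_cases hab : a = b
  · exact hab ▸ .refl a
  · exact SimpleGraph.Adj.reachable <| (SimpleGraph.fromRel_adj _ _ _).mpr ⟨hab, .inl h⟩

theorem killingGraph_reachable_of_commute (a b : C) (h : Commute (a : G) b) :
    (killingGraph C).Reachable a b :=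
  killingGraph_reachable_of_exists_commute_mul a b ⟨a, a.2, (Commute.refl _).mul_right h⟩

end KillingGraph

section Unipotent

variable {R : Type*} [CommRing R]

/-- `sqZeroMat x y = v (Jv)ᵀ` with `v = (x, y)` and `Jv = (-y, x)`: a square-zero matrix whose
kernel and image are the line through `v`. -/
def sqZeroMat (x y : R) : Matrix (Fin 2) (Fin 2) R := !![-(x * y), x ^ 2; -(y ^ 2), x * y]

theorem sqZeroMat_mul_sqZeroMat {x y z w : R} (h : x * w - y * z = 0) :
    sqZeroMat x y * sqZeroMat z w = 0 := by
  ext i j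
  fin_cases i <;> fin_cases j <;> simp [sqZeroMat, mul_apply, Fin.sum_univ_succ]
  · linear_combination (-(x * w)) * h
  · linear_combination (x * z) * h
  · linear_combination (-(y * w)) * h
  · linear_combination (y * z) * h

theorem det_one_add_smul_sqZeroMat (s x y : R) : det (1 + s • sqZeroMat x y) = 1 := by
  simp [sqZeroMat, one_fin_two, det_fin_two]; ring

def unipotentSL (s x y : R) : SL(2, R) :=
  ⟨1 + s • sqZeroMat x y, det_one_add_smul_sqZeroMat s x y⟩

@[simp]
theorem coe_unipotentSL (s x y : R) :
    (unipotentSL s x y : Matrix (Fin 2) (Fin 2) R) = 1 + s • sqZeroMat x y :=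
  rfl

theorem commute_unipotentSL {x y z w : R} (h : x * w - y * z = 0) (s t : R) :
    Commute (unipotentSL s x y) (unipotentSL t z w) := by
  have h₁ := sqZeroMat_mul_sqZeroMat h
  have h₂ := sqZeroMat_mul_sqZeroMat (show z * y - w * x = 0 by linear_combination -h)
  refine Subtype.ext (?_ : (unipotentSL s x y : Matrix (Fin 2) (Fin 2) R) * unipotentSL t z w =
    unipotentSL t z w * unipotentSL s x y)
  simp only [coe_unipotentSL, mul_add, add_mul, mul_one, one_mul,
    mul_smul_comm, smul_mul_assoc, h₁, h₂, smul_zero, add_zero]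
  abel

theorem mul_unipotentSL_one_zero (s : R) (Y : SL(2, R)) :
    Y * unipotentSL s 1 0 = unipotentSL s (Y 0 0) (Y 1 0) * Y := by
  have hdet : Y 0 0 * Y 1 1 - Y 0 1 * Y 1 0 = 1 := by rw [← det_fin_two]; exact Y.2
  refine Subtype.ext ?_
  ext i j
  fin_cases i <;> fin_cases j <;>
    simp [sqZeroMat, mul_apply, Fin.sum_univ_succ, one_apply]
  · ring
  · linear_combination (-(s * Y 0 0)) * hdet
  · ring
  · linear_combination (-(s * Y 1 0)) * hdet

theorem trace_unipotentSL_mul (s t x y z w : R) :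
    trace ((unipotentSL s x y * unipotentSL t z w : SL(2, R)) : Matrix (Fin 2) (Fin 2) R) =
      2 - s * t * (x * w - y * z) ^ 2 := by
  simp [sqZeroMat, trace_fin_two, mul_apply, Fin.sum_univ_succ, one_apply]
  ring

end Unipotent

section Field

variable {F : Type*} [Field F]

theorem exists_eq_smul_sqZeroMat {X : Matrix (Fin 2) (Fin 2) F} (htr : trace X = 0)
    (hdet : det X = 0) : ∃ r x y : F, ¬(x = 0 ∧ y = 0) ∧ X = r • sqZeroMat x y := by
  rw [trace_fin_two] at htr
  rw [det_fin_two] at hdet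
  by_cases hb : X 0 1 = 0
  · have h00 : X 0 0 = 0 := pow_eq_zero_iff two_ne_zero |>.mp <| by
      linear_combination X 0 0 * htr - hdet - X 1 0 * hb
    refine ⟨-X 1 0, 0, 1, by simp, ?_⟩
    ext i j
    fin_cases i <;> fin_cases j <;> simp [sqZeroMat, hb, h00]
    linear_combination htr - h00
  · refine ⟨X 0 1, 1, -X 0 0 / X 0 1, by simp, ?_⟩
    ext i j
    fin_cases i <;> fin_cases j <;> simp [sqZeroMat] <;> field_simp
    · linear_combination -hdet + X 0 0 * htr
    · linear_combination htr

theorem exists_eq_unipotentSL_of_trace_eq_two {M : SL(2, F)}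
    (h : trace (M : Matrix (Fin 2) (Fin 2) F) = 2) :
    ∃ r x y : F, ¬(x = 0 ∧ y = 0) ∧ M = unipotentSL r x y := by
  have hdet := M.2
  rw [det_fin_two] at hdet
  rw [trace_fin_two] at h
  obtain ⟨r, x, y, hxy, hX⟩ :=
    exists_eq_smul_sqZeroMat (X := (M : Matrix (Fin 2) (Fin 2) F) - 1)
      (by simp [trace_fin_two, h]) (by simp [det_fin_two]; linear_combination hdet - h)
  exact ⟨r, x, y, hxy, Subtype.ext <| by rw [coe_unipotentSL, ← hX, add_sub_cancel]⟩

theorem exists_SL2_col_eq {x y : F} (h : ¬(x = 0 ∧ y = 0)) :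
    ∃ Y : SL(2, F), Y 0 0 = x ∧ Y 1 0 = y := by
  by_cases hx : x = 0
  · have hy : y ≠ 0 := fun hy => h ⟨hx, hy⟩
    exact ⟨⟨!![x, -y⁻¹; y, 0], by simp [det_fin_two, hx, inv_mul_cancel₀ hy]⟩, rfl, rfl⟩
  · exact ⟨⟨!![x, 0; y, x⁻¹], by simp [det_fin_two, mul_inv_cancel₀ hx]⟩, rfl, rfl⟩

theorem isConj_unipotentSL (s : F) {x y : F} (h : ¬(x = 0 ∧ y = 0)) :
    IsConj (unipotentSL s 1 0) (unipotentSL s x y) := by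
  obtain ⟨Y, rfl, rfl⟩ := exists_SL2_col_eq h
  exact isConj_iff.mpr ⟨Y, by rw [mul_unipotentSL_one_zero, mul_inv_cancel_right]⟩

theorem exists_commute_unipotentSL_of_trace_eq_neg_two (s : F) {M : SL(2, F)}
    (h : trace (M : Matrix (Fin 2) (Fin 2) F) = -2) :
    ∃ x y : F, ¬(x = 0 ∧ y = 0) ∧ Commute (unipotentSL s x y) M := by
  obtain ⟨r, x, y, hxy, hM⟩ := exists_eq_unipotentSL_of_trace_eq_two (M := -M) (by simp [h])
  refine ⟨x, y, hxy, ?_⟩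
  rw [← neg_neg M, hM]
  exact (commute_unipotentSL (by ring) s r).neg_right

theorem trace_eq_two_of_pow_eq_one (p : ℕ) [Fact p.Prime] [CharP F p] {B : SL(2, F)}
    (hB : B ^ p = 1) : trace (B : Matrix (Fin 2) (Fin 2) F) = 2 := by
  have hnil : IsNilpotent ((B : Matrix (Fin 2) (Fin 2) F) - 1) :=
    ⟨p, by simpa [sub_pow_char_of_commute p (Commute.one_right (B : Matrix (Fin 2) (Fin 2) F)),
      sub_eq_zero] using congrArg ((↑) : SL(2, F) → Matrix (Fin 2) (Fin 2) F) hB⟩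
  have := (isNilpotent_trace_of_isNilpotent hnil).eq_zero
  rw [trace_sub, trace_one] at this
  simpa [sub_eq_zero] using this

theorem exists_commute_unipotentSL_mul (s : F) {x y z w μ : F}
    (hμ : s * μ * (x * w - y * z) = 2) :
    ∃ e₀ e₁ : F, ¬(e₀ = 0 ∧ e₁ = 0) ∧
      Commute (unipotentSL s e₀ e₁) (unipotentSL s x y * unipotentSL s (μ * z) (μ * w)) :=
  exists_commute_unipotentSL_of_trace_eq_neg_two s <| by
    rw [trace_unipotentSL_mul]
    linear_combination (-(s * μ * (x * w - y * z)) - 2) * hμ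

theorem eq_one_or_eq_neg_one_of_mem_center {A : SL(2, F)}
    (hA : A ∈ Subgroup.center SL(2, F)) : A = 1 ∨ A = -1 := by
  obtain ⟨r, hr, hA⟩ := Matrix.SpecialLinearGroup.mem_center_iff.mp hA
  rw [Fintype.card_fin, sq, mul_self_eq_one_iff] at hr
  rcases hr with rfl | rfl
  · exact .inl <| Subtype.ext <| by rw [← hA, map_one]; rfl
  · exact .inr <| Subtype.ext <| by rw [← hA, map_neg, map_one]; rfl

theorem neg_one_mem_center_SL2 : (-1 : SL(2, F)) ∈ Subgroup.center SL(2, F) :=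
  Subgroup.mem_center_iff.mpr fun g => by rw [neg_one_mul, mul_neg_one]

theorem exists_mk_eq_and_pow_eq_one {p : ℕ} (hodd : Odd p) {A : SL(2, F)}
    (hA : A ^ p ∈ Subgroup.center SL(2, F)) :
    ∃ B : SL(2, F), (B : PSL(2, F)) = A ∧ B ^ p = 1 := by
  rcases eq_one_or_eq_neg_one_of_mem_center hA with h | h
  · exact ⟨A, rfl, h⟩
  · refine ⟨-A, ?_, by rw [hodd.neg_pow, h, neg_neg]⟩
    rw [← neg_one_mul, QuotientGroup.mk_mul, (QuotientGroup.eq_one_iff _).mpr neg_one_mem_center_SL2,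
      one_mul]

theorem exists_isConj_unipotentSL_of_orderOf_eq {p : ℕ} [Fact p.Prime] [CharP F p] (hodd : Odd p)
    {g : PSL(2, F)} (hg : orderOf g = p) :
    ∃ r : F, r ≠ 0 ∧ IsConj ((unipotentSL r 1 0 : SL(2, F)) : PSL(2, F)) g := by
  obtain ⟨A, rfl⟩ := QuotientGroup.mk_surjective g
  have hAp : A ^ p ∈ Subgroup.center SL(2, F) :=
    (QuotientGroup.eq_one_iff _).mp <| by rw [QuotientGroup.mk_pow, ← hg, pow_orderOf_eq_one]
  obtain ⟨B, hBA, hB⟩ := exists_mk_eq_and_pow_eq_one hodd hAp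
  obtain ⟨r, x, y, hxy, rfl⟩ :=
    exists_eq_unipotentSL_of_trace_eq_two (trace_eq_two_of_pow_eq_one p hB)
  refine ⟨r, ?_, hBA ▸ (QuotientGroup.mk' _).map_isConj (isConj_unipotentSL r hxy)⟩
  rintro rfl
  have : unipotentSL (0 : F) x y = 1 := Subtype.ext (by simp)
  rw [← hBA, this, QuotientGroup.mk_one, orderOf_one] at hg
  exact (Fact.out : p.Prime).one_lt.ne hg

theorem isConj_mk_unipotentSL_iff (s : F) (a : PSL(2, F)) :
    IsConj ((unipotentSL s 1 0 : SL(2, F)) : PSL(2, F)) a ↔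
      ∃ x y : F, ¬(x = 0 ∧ y = 0) ∧ a = (unipotentSL s x y : SL(2, F)) := by
  constructor
  · intro h
    obtain ⟨c, rfl⟩ := isConj_iff.mp h
    obtain ⟨Z, rfl⟩ := QuotientGroup.mk_surjective c
    refine ⟨Z 0 0, Z 1 0, fun ⟨h₀, h₁⟩ => ?_, ?_⟩
    · have hdet := Z.2
      rw [det_fin_two] at hdet
      simp [h₀, h₁] at hdet
    · rw [← QuotientGroup.mk_inv, ← QuotientGroup.mk_mul, ← QuotientGroup.mk_mul,
        mul_unipotentSL_one_zero, mul_inv_cancel_right]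
  · rintro ⟨x, y, hxy, rfl⟩
    exact (QuotientGroup.mk' _).map_isConj (isConj_unipotentSL s hxy)

theorem killingGraph_isConj_unipotentSL_connected (h2 : (2 : F) ≠ 0) {s : F} (hs : s ≠ 0) :
    (killingGraph
      {a : PSL(2, F) | IsConj ((unipotentSL s 1 0 : SL(2, F)) : PSL(2, F)) a}).Connected := by
  set C := {a : PSL(2, F) | IsConj ((unipotentSL s 1 0 : SL(2, F)) : PSL(2, F)) a}
  have hmem {x y : F} (h : ¬(x = 0 ∧ y = 0)) :
      ((unipotentSL s x y : SL(2, F)) : PSL(2, F)) ∈ C :=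
    (isConj_mk_unipotentSL_iff s _).mpr ⟨x, y, h, rfl⟩
  have hmap {a b : SL(2, F)} (h : Commute a b) : Commute (a : PSL(2, F)) b :=
    h.map (QuotientGroup.mk' _)
  refine (SimpleGraph.connected_iff _).mpr ⟨fun A B => ?_, ⟨⟨_, IsConj.refl _⟩⟩⟩
  obtain ⟨x, y, hxy, hA⟩ := (isConj_mk_unipotentSL_iff s _).mp A.2
  obtain ⟨z, w, hzw, hB⟩ := (isConj_mk_unipotentSL_iff s _).mp B.2
  by_cases hω : x * w - y * z = 0
  · exact killingGraph_reachable_of_commute A B (hA ▸ hB ▸ hmap (commute_unipotentSL hω s s))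
  obtain ⟨μ, hμ⟩ : ∃ μ : F, s * μ * (x * w - y * z) = 2 :=
    ⟨2 / (s * (x * w - y * z)), by field_simp⟩
  obtain ⟨e₀, e₁, he, hcomm⟩ := exists_commute_unipotentSL_mul s hμ
  have hμ₀ : μ ≠ 0 := right_ne_zero_of_mul (left_ne_zero_of_mul (hμ ▸ h2))
  have hμzw : ¬(μ * z = 0 ∧ μ * w = 0) := by simpa [hμ₀] using hzw
  let B' : C := ⟨_, hmem hμzw⟩
  have hAB' : (killingGraph C).Reachable A B' :=
    killingGraph_reachable_of_exists_commute_mul A B' ⟨_, hmem he, by rw [hA]; exact hmap hcomm⟩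
  have hB'B : (killingGraph C).Reachable B' B :=
    killingGraph_reachable_of_commute B' B (hB ▸ hmap (commute_unipotentSL (by ring) s s))
  exact hAB'.trans hB'B

end Field

theorem statement6_general {F : Type*} [Field F] (p : ℕ) [Fact p.Prime]
    [CharP F p] (hodd : Odd p)
    (g₀ : Matrix.SpecialLinearGroup (Fin 2) F ⧸
      Subgroup.center (Matrix.SpecialLinearGroup (Fin 2) F))
    (hg₀ : orderOf g₀ = p) :
    (killingGraph {h : Matrix.SpecialLinearGroup (Fin 2) F ⧸
      Subgroup.center (Matrix.SpecialLinearGroup (Fin 2) F) | IsConj g₀ h}).Connected := by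
  have h2 : (2 : F) ≠ 0 := fun h => by
    have hp2 : p = 2 := (Nat.prime_dvd_prime_iff_eq Fact.out Nat.prime_two).mp <|
      (CharP.cast_eq_zero_iff F p 2).mp (mod_cast h)
    exact Nat.not_even_iff_odd.mpr hodd (hp2 ▸ even_two)
  obtain ⟨r, hr, hconj⟩ := exists_isConj_unipotentSL_of_orderOf_eq hodd hg₀
  have hclass :
      {h | IsConj g₀ h} = {h | IsConj ((unipotentSL r 1 0 : SL(2, F)) : PSL(2, F)) h} :=
    Set.ext fun h => ⟨hconj.trans, hconj.symm.trans⟩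
  rw [hclass]
  exact killingGraph_isConj_unipotentSL_connected h2 hr

/-- In `PSL₂(F) = SL₂(F) ⧸ Z(SL₂(F))` over a finite field of odd characteristic
`p`, the Killing graph of a conjugacy class of elements of order `p` is connected,
i.e. the Killing form is irreducible. -/
theorem statement6 {F : Type*} [Field F] [Fintype F] (p : ℕ) [Fact p.Prime]
    [CharP F p] (hodd : Odd p)
    (g₀ : Matrix.SpecialLinearGroup (Fin 2) F ⧸
      Subgroup.center (Matrix.SpecialLinearGroup (Fin 2) F))
    (hg₀ : orderOf g₀ = p) :
    (killingGraph {h : Matrix.SpecialLinearGroup (Fin 2) F ⧸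
      Subgroup.center (Matrix.SpecialLinearGroup (Fin 2) F) | IsConj g₀ h}).Connected :=
  statement6_general p hodd g₀ hg₀
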